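/- With t = [[1,1],[0,1]] ∈ G, the map Θ₁ defined by Θ₁(f) = f·y₁ + (t·f)·y₂ + (t²·f)·y₃ is well defined from S^H_χ into the G-fixed elements of R lying in the S-submodule spanned by y₁, y₂, y₃, and Θ₁ is an isomorphism of S^G-modules from S^H_χ onto the module of G-invariant 1-forms {f₁y₁ + f₂y₂ + f₃y₃ : fₛ ∈ S} ∩ R^G. -/

import Mathlib

open Matrix MvPolynomial

set_option synthInstance.maxHeartbeats 1000000
set_option maxHeartbeats 1000000

abbrev F3 : Type := ZMod 3
abbrev G3 : Type := Matrix.SpecialLinearGroup (Fin 2) F3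
abbrev S3 : Type := MvPolynomial (Fin 3) F3

/-- The fixed basis `v₁, v₂, v₃` of the traceless `2 × 2` matrices over `𝔽₃`. -/
def V : Fin 3 → Matrix (Fin 2) (Fin 2) F3 :=
  ![!![0, 1; -1, 0], !![-1, -1; -1, 1], !![1, -1; -1, -1]]

/-- Coordinates of a traceless matrix with respect to the basis `v₁, v₂, v₃`. -/
def coordM : Fin 3 → Matrix (Fin 2) (Fin 2) F3 → F3 :=
  ![fun X => X 1 0 - X 0 1, fun X => X 0 0 - X 0 1 - X 1 0, fun X => -(X 0 0 + X 0 1 + X 1 0)]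

/-- Matrix of the (dual) action of `g` on `M*`: `g • x_s = ∑ r, (rep g) s r • x_r`, where
`(rep g) s r = x_s (g⁻¹ • v_r) = coordM s (g⁻¹ vᵣ g)`, coming from `(g • f)(v) = f(g⁻¹ • v)`. -/
def rep (g : G3) : Matrix (Fin 3) (Fin 3) F3 :=
  Matrix.of fun s r => coordM s ((g⁻¹ : G3) * V r * (g : Matrix (Fin 2) (Fin 2) F3))

/-- The action of `g ∈ SL₂(𝔽₃)` on `S = 𝔽₃[x₁,x₂,x₃]` by algebra automorphisms, given by
substituting `x_s ↦ g • x_s = ∑ r, (rep g) s r • x_r`. -/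
noncomputable def actS (g : G3) : S3 →ₐ[F3] S3 :=
  MvPolynomial.aeval fun s => ∑ r : Fin 3, rep g s r • MvPolynomial.X r

noncomputable def a1 : S3 := X 0 ^ 2 + X 1 ^ 2 + X 2 ^ 2
noncomputable def a2 : S3 := X 0 * X 1 * X 2
noncomputable def a3 : S3 := X 0 ^ 4 + X 1 ^ 4 + X 2 ^ 4
noncomputable def bP : S3 := X 0 ^ 4 * X 1 ^ 2 + X 0 ^ 2 * X 2 ^ 4 + X 1 ^ 4 * X 2 ^ 2
noncomputable def av : Fin 3 → S3 := ![a1, a2, a3]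

def tm : G3 := ⟨!![1, 1; 0, 1], by decide⟩
def im : G3 := ⟨!![0, 1; -1, 0], by decide⟩
def jm : G3 := ⟨!![1, -1; -1, -1], by decide⟩

/-- The quaternion subgroup `H = ⟨i, j⟩ ≅ Q₈` of `SL₂(𝔽₃)`. -/
def H3 : Subgroup G3 := Subgroup.closure {im, jm}

/-- The character with `χ(±e) = χ(±i) = 1` and `χ(±j) = χ(±k) = -1` (its values off the
set `{±e, ±i}` are `-1`; only the restriction to `H` is ever used). -/
def chi (g : G3) : F3 :=
  if (g : Matrix (Fin 2) (Fin 2) F3) = 1 ∨ (g : Matrix (Fin 2) (Fin 2) F3) = -1 ∨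
     (g : Matrix (Fin 2) (Fin 2) F3) = (im : Matrix (Fin 2) (Fin 2) F3) ∨
     (g : Matrix (Fin 2) (Fin 2) F3) = -(im : Matrix (Fin 2) (Fin 2) F3) then 1 else -1

/-- The `𝔽₃`-submodule `S^H_χ` of `χ`-relative `H`-invariants in `S`. -/
noncomputable def relInv : Submodule F3 S3 where
  carrier := {f | ∀ h ∈ H3, actS h f = chi h • f}
  add_mem' := by
    intro f g hf hg h hh
    rw [map_add, hf h hh, hg h hh, smul_add]
  zero_mem' := by
    intro h hh
    rw [map_zero, smul_zero]
  smul_mem' := by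
    intro c f hf h hh
    rw [_root_.map_smul, hf h hh, smul_comm]

open TensorProduct

/-- The exterior algebra `Λ(M*)` on `y₁, y₂, y₃` (with `M*` in dual-basis coordinates). -/
abbrev Lam : Type := ExteriorAlgebra F3 (Fin 3 → F3)

/-- `y_s = dx_s`, the exterior generators. -/
noncomputable def yy (s : Fin 3) : Lam := ExteriorAlgebra.ι F3 (Pi.single s 1)

/-- The linear action of `g` on the coordinate space of `y₁, y₂, y₃`:
`y_s ↦ ∑ r, (rep g) s r • y_r`. -/
noncomputable def repL (g : G3) : (Fin 3 → F3) →ₗ[F3] (Fin 3 → F3) :=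
  Matrix.toLin' (rep g)ᵀ

/-- The algebra of differential forms `R = S ⊗ Λ(M*)`: the graded-commutative `𝔽₃`-algebra
generated by the central `x₁, x₂, x₃` and the anticommuting `y₁, y₂, y₃`. -/
abbrev Rf : Type := S3 ⊗[F3] Lam

/-- The action of `g ∈ SL₂(𝔽₃)` on `R` by ring automorphisms, acting on `x`'s as on `S`
and on `y₁, y₂, y₃` by the same matrices as on `x₁, x₂, x₃`. -/
noncomputable def actR (g : G3) : Rf →ₐ[F3] Rf :=
  Algebra.TensorProduct.map (actS g) (ExteriorAlgebra.map (repL g))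

noncomputable def c1 : Rf := X 0 ⊗ₜ[F3] yy 0 + X 1 ⊗ₜ[F3] yy 1 + X 2 ⊗ₜ[F3] yy 2
noncomputable def c2 : Rf :=
  (X 1 * X 2) ⊗ₜ[F3] yy 0 + (X 2 * X 0) ⊗ₜ[F3] yy 1 + (X 0 * X 1) ⊗ₜ[F3] yy 2
noncomputable def c3 : Rf :=
  (X 0 ^ 3) ⊗ₜ[F3] yy 0 + (X 1 ^ 3) ⊗ₜ[F3] yy 1 + (X 2 ^ 3) ⊗ₜ[F3] yy 2
noncomputable def c4 : Rf :=
  (X 0 * X 1 ^ 2) ⊗ₜ[F3] yy 0 + (X 1 * X 2 ^ 2) ⊗ₜ[F3] yy 1 + (X 2 * X 0 ^ 2) ⊗ₜ[F3] yy 2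
noncomputable def c5 : Rf :=
  (X 1 ^ 3 * X 2) ⊗ₜ[F3] yy 0 + (X 2 ^ 3 * X 0) ⊗ₜ[F3] yy 1 + (X 0 ^ 3 * X 1) ⊗ₜ[F3] yy 2
noncomputable def c6 : Rf :=
  (X 0 ^ 3 * X 1 ^ 2) ⊗ₜ[F3] yy 0 + (X 1 ^ 3 * X 2 ^ 2) ⊗ₜ[F3] yy 1 +
    (X 2 ^ 3 * X 0 ^ 2) ⊗ₜ[F3] yy 2

noncomputable def d1 : Rf :=
  X 0 ⊗ₜ[F3] (yy 1 * yy 2) + X 1 ⊗ₜ[F3] (yy 2 * yy 0) + X 2 ⊗ₜ[F3] (yy 0 * yy 1)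
noncomputable def d2 : Rf :=
  (X 1 * X 2) ⊗ₜ[F3] (yy 1 * yy 2) + (X 2 * X 0) ⊗ₜ[F3] (yy 2 * yy 0) +
    (X 0 * X 1) ⊗ₜ[F3] (yy 0 * yy 1)
noncomputable def d3 : Rf :=
  (X 0 ^ 3) ⊗ₜ[F3] (yy 1 * yy 2) + (X 1 ^ 3) ⊗ₜ[F3] (yy 2 * yy 0) +
    (X 2 ^ 3) ⊗ₜ[F3] (yy 0 * yy 1)
noncomputable def d4 : Rf :=
  (X 0 * X 1 ^ 2) ⊗ₜ[F3] (yy 1 * yy 2) + (X 1 * X 2 ^ 2) ⊗ₜ[F3] (yy 2 * yy 0) +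
    (X 2 * X 0 ^ 2) ⊗ₜ[F3] (yy 0 * yy 1)
noncomputable def d5 : Rf :=
  (X 1 ^ 3 * X 2) ⊗ₜ[F3] (yy 1 * yy 2) + (X 2 ^ 3 * X 0) ⊗ₜ[F3] (yy 2 * yy 0) +
    (X 0 ^ 3 * X 1) ⊗ₜ[F3] (yy 0 * yy 1)
noncomputable def d6 : Rf :=
  (X 0 ^ 3 * X 1 ^ 2) ⊗ₜ[F3] (yy 1 * yy 2) + (X 1 ^ 3 * X 2 ^ 2) ⊗ₜ[F3] (yy 2 * yy 0) +
    (X 2 ^ 3 * X 0 ^ 2) ⊗ₜ[F3] (yy 0 * yy 1)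

/-- The top form `y₁y₂y₃`. -/
noncomputable def y123 : Lam := yy 0 * yy 1 * yy 2

/-- `Θ₁(f) = f·y₁ + (t·f)·y₂ + (t²·f)·y₃`. -/
noncomputable def Theta1 (f : S3) : Rf :=
  f ⊗ₜ[F3] yy 0 + (actS tm f) ⊗ₜ[F3] yy 1 + (actS tm (actS tm f)) ⊗ₜ[F3] yy 2

/-- The `S`-submodule of `R` spanned by `y₁, y₂, y₃` (the 1-forms). -/
def oneForms : Set Rf :=
  {z | ∃ f₁ f₂ f₃ : S3, z = f₁ ⊗ₜ[F3] yy 0 + f₂ ⊗ₜ[F3] yy 1 + f₃ ⊗ₜ[F3] yy 2}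

/-!
`SL₂(𝔽₃)` is generated by `t` and `i`. Since `t` permutes `y₁ → y₂ → y₃ → y₁`, a `1`-form
`f₁y₁ + f₂y₂ + f₃y₃` is `t`-invariant exactly when `f₂ = t·f₁` and `f₃ = t·f₂`, i.e. when it is
`Θ₁(f₁)`. As `i` fixes `y₁` and negates `y₂, y₃`, the form `Θ₁(f)` is moreover `i`-invariant iff
`i·f = f` and `i·(t·f) = -(t·f)`, and the relation `it = tj` turns the latter into `j·f = -f`.
Because `H = ⟨i, j⟩` with `χ(i) = 1`, `χ(j) = -1`, these two conditions say `f ∈ S^H_χ`.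
-/

lemma eq_sum_coordM_smul_V (A : Matrix (Fin 2) (Fin 2) F3) (hA : A.trace = 0) :
    A = ∑ s, coordM s A • V s := by
  have h11 : A 1 1 = -A 0 0 := by
    rw [Matrix.trace_fin_two] at hA
    linear_combination hA
  ext i j
  fin_cases i <;> fin_cases j <;>
    simp [Fin.sum_univ_three, coordM, V, h11] <;> grind

lemma coordM_sum_smul (s : Fin 3) (c : Fin 3 → F3) (A : Fin 3 → Matrix (Fin 2) (Fin 2) F3) :
    coordM s (∑ r, c r • A r) = ∑ r, c r * coordM s (A r) := by
  fin_cases s <;> simp [coordM, Fin.sum_univ_three] <;> ring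

lemma conj_V_eq_sum_rep (g : G3) (r : Fin 3) :
    ((g⁻¹ : G3) : Matrix (Fin 2) (Fin 2) F3) * V r * g = ∑ s, rep g s r • V s := by
  refine eq_sum_coordM_smul_V _ ?_
  rw [Matrix.trace_mul_cycle, ← Matrix.SpecialLinearGroup.coe_mul, mul_inv_cancel,
    Matrix.SpecialLinearGroup.coe_one, one_mul]
  fin_cases r <;> decide

lemma rep_mul (g g' : G3) : rep (g * g') = rep g' * rep g := by
  ext s r
  calc rep (g * g') s r
      = coordM s (((g'⁻¹ : G3) : Matrix (Fin 2) (Fin 2) F3) * (g⁻¹ * V r * g) * g') := by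
        simp only [rep, Matrix.of_apply, _root_.mul_inv_rev, Matrix.SpecialLinearGroup.coe_mul,
          Matrix.mul_assoc]
    _ = ∑ q, rep g q r * rep g' s q := by
        rw [conj_V_eq_sum_rep g r]
        simp only [Matrix.mul_sum, Matrix.sum_mul, Matrix.mul_smul,
          Matrix.smul_mul, coordM_sum_smul]
        rfl
    _ = (rep g' * rep g) s r := by simp only [Matrix.mul_apply, mul_comm]

lemma rep_one : rep 1 = 1 := by decide

lemma actS_mul (g g' : G3) : actS (g * g') = (actS g).comp (actS g') := by
  refine MvPolynomial.algHom_ext fun s => ?_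
  simp only [actS, AlgHom.comp_apply, aeval_X, map_sum, _root_.map_smul, Finset.smul_sum,
    smul_smul, rep_mul, Matrix.mul_apply, Finset.sum_smul]
  exact Finset.sum_comm

lemma actS_one : actS 1 = AlgHom.id F3 S3 :=
  MvPolynomial.algHom_ext fun s => by simp [actS, rep_one, Matrix.one_apply, ite_smul]

lemma actS_actS (g g' : G3) (f : S3) : actS g (actS g' f) = actS (g * g') f := by
  rw [actS_mul, AlgHom.comp_apply]

lemma repL_mul (g g' : G3) : repL (g * g') = repL g ∘ₗ repL g' := by
  rw [repL, repL, repL, rep_mul, Matrix.transpose_mul, Matrix.toLin'_mul]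

lemma repL_one : repL 1 = LinearMap.id := by
  rw [repL, rep_one, Matrix.transpose_one, Matrix.toLin'_one]

lemma actR_tmul (g : G3) (f : S3) (w : Lam) :
    actR g (f ⊗ₜ[F3] w) = actS g f ⊗ₜ[F3] ExteriorAlgebra.map (repL g) w :=
  Algebra.TensorProduct.map_tmul _ _ _ _

lemma actR_mul (g g' : G3) : actR (g * g') = (actR g).comp (actR g') := by
  rw [actR, actR, actR, actS_mul, repL_mul, ← ExteriorAlgebra.map_comp_map,
    Algebra.TensorProduct.map_comp]

lemma actR_one : actR 1 = AlgHom.id F3 Rf := by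
  rw [actR, actS_one, repL_one, ExteriorAlgebra.map_id, Algebra.TensorProduct.map_id]

lemma sum_tmul_ι_single_injective {R M ι : Type*} [CommRing R] [AddCommGroup M] [Module R M]
    [Fintype ι] [DecidableEq ι] :
    Function.Injective fun f : ι → M =>
      ∑ i, f i ⊗ₜ[R] ExteriorAlgebra.ι R (Pi.single i (1 : R)) := by
  intro f g h
  funext i
  have hinv : ∀ v : ι → R, ExteriorAlgebra.ιInv (ExteriorAlgebra.ι R v) = v :=
    ExteriorAlgebra.ι_leftInverse
  have := congrArg ((TensorProduct.rid R M).toLinearMap ∘ₗ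
    LinearMap.lTensor M (LinearMap.proj i ∘ₗ ExteriorAlgebra.ιInv)) h
  simpa [hinv, Pi.single_apply] using this

lemma tmul_yy_injective {f₀ f₁ f₂ g₀ g₁ g₂ : S3}
    (h : f₀ ⊗ₜ[F3] yy 0 + f₁ ⊗ₜ[F3] yy 1 + f₂ ⊗ₜ[F3] yy 2
      = g₀ ⊗ₜ[F3] yy 0 + g₁ ⊗ₜ[F3] yy 1 + g₂ ⊗ₜ[F3] yy 2) :
    f₀ = g₀ ∧ f₁ = g₁ ∧ f₂ = g₂ := by
  have := sum_tmul_ι_single_injective (R := F3) (a₁ := ![f₀, f₁, f₂]) (a₂ := ![g₀, g₁, g₂])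
    (by simpa [Fin.sum_univ_three, yy] using h)
  simpa using this

lemma tm_pow_three : tm ^ 3 = 1 := Subtype.ext (by decide)

lemma im_mul_tm : im * tm = tm * jm := Subtype.ext (by decide)

lemma actS_tm_tm_tm (f : S3) : actS tm (actS tm (actS tm f)) = f := by
  rw [actS_actS, actS_actS, ← pow_three', tm_pow_three, actS_one, AlgHom.id_apply]

lemma map_repL_tm_yy (s : Fin 3) : ExteriorAlgebra.map (repL tm) (yy s) = yy (s + 1) := by
  unfold yy
  rw [ExteriorAlgebra.map_apply_ι, repL, Matrix.toLin'_apply]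
  congr 1
  fin_cases s <;> decide

lemma map_repL_im_yy (s : Fin 3) :
    ExteriorAlgebra.map (repL im) (yy s) = (if s = 0 then 1 else -1 : F3) • yy s := by
  unfold yy
  rw [ExteriorAlgebra.map_apply_ι, repL, Matrix.toLin'_apply, ← map_smul]
  congr 1
  fin_cases s <;> decide

lemma actR_tm_oneForm (f₀ f₁ f₂ : S3) :
    actR tm (f₀ ⊗ₜ[F3] yy 0 + f₁ ⊗ₜ[F3] yy 1 + f₂ ⊗ₜ[F3] yy 2)
      = actS tm f₂ ⊗ₜ[F3] yy 0 + actS tm f₀ ⊗ₜ[F3] yy 1 + actS tm f₁ ⊗ₜ[F3] yy 2 := by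
  simp only [map_add, actR_tmul, map_repL_tm_yy, show (0 : Fin 3) + 1 = 1 from rfl,
    show (1 : Fin 3) + 1 = 2 from rfl, show (2 : Fin 3) + 1 = 0 from rfl]
  abel

lemma actR_im_oneForm (f₀ f₁ f₂ : S3) :
    actR im (f₀ ⊗ₜ[F3] yy 0 + f₁ ⊗ₜ[F3] yy 1 + f₂ ⊗ₜ[F3] yy 2)
      = actS im f₀ ⊗ₜ[F3] yy 0 + (-actS im f₁) ⊗ₜ[F3] yy 1 + (-actS im f₂) ⊗ₜ[F3] yy 2 := by
  simp [actR_tmul, map_repL_im_yy, TensorProduct.tmul_neg, TensorProduct.neg_tmul]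

lemma exists_eq_tm_pow_mul_im_pow_mul_tm_pow :
    ∀ g : G3, ∃ a : Fin 3, ∃ b : Fin 4, ∃ c : Fin 3,
      (g : Matrix (Fin 2) (Fin 2) F3)
        = ((tm ^ (a : ℕ) * im ^ (b : ℕ) * tm ^ (c : ℕ) : G3) : Matrix (Fin 2) (Fin 2) F3) := by
  decide

lemma closure_tm_im : Subgroup.closure {tm, im} = ⊤ := by
  refine eq_top_iff.2 fun g _ => ?_
  obtain ⟨a, b, c, hg⟩ := exists_eq_tm_pow_mul_im_pow_mul_tm_pow g
  rw [Subtype.ext hg]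
  have ht : tm ∈ Subgroup.closure {tm, im} := Subgroup.subset_closure (by simp)
  have hi : im ∈ Subgroup.closure {tm, im} := Subgroup.subset_closure (by simp)
  exact mul_mem (mul_mem (pow_mem ht _) (pow_mem hi _)) (pow_mem ht _)

lemma actR_eq_of_tm_im {z : Rf} (ht : actR tm z = z) (hi : actR im z = z) (g : G3) :
    actR g z = z := by
  have hg : g ∈ Subgroup.closure {tm, im} := by
    rw [closure_tm_im]
    exact Subgroup.mem_top g
  induction hg using Subgroup.closure_induction with
  | mem x hx =>
    rcases hx with rfl | rfl
    exacts [ht, hi]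
  | one => rw [actR_one, AlgHom.id_apply]
  | mul x y _ _ hx hy => rw [actR_mul, AlgHom.comp_apply, hy, hx]
  | inv x _ hx =>
    conv_lhs => rw [← hx]
    rw [← AlgHom.comp_apply, ← actR_mul, inv_mul_cancel, actR_one, AlgHom.id_apply]

-- `{±e, ±i, ±j, ±k}`, where `i² = -e`, `i³ = -i`, `j³ = -j` and `ji = -k`.
def quaternionFinset : Finset G3 := {1, im ^ 2, im, im ^ 3, jm, jm ^ 3, im * jm, jm * im}

def quaternionSubgroup : Subgroup G3 where
  carrier := quaternionFinset
  mul_mem' {a b} := by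
    have h : ∀ a ∈ quaternionFinset, ∀ b ∈ quaternionFinset, a * b ∈ quaternionFinset := by
      decide
    exact fun ha hb => h a ha b hb
  one_mem' := by decide
  inv_mem' {a} := by
    have h : ∀ a ∈ quaternionFinset, a⁻¹ ∈ quaternionFinset := by decide
    exact fun ha => h a ha

lemma H3_le_quaternionSubgroup : H3 ≤ quaternionSubgroup := by
  refine Subgroup.closure_le _ |>.2 ?_
  rintro g (rfl | rfl)
  exacts [(by decide : im ∈ quaternionFinset), (by decide : jm ∈ quaternionFinset)]

lemma chi_mul_of_mem_quaternionFinset :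
    ∀ g ∈ quaternionFinset, ∀ g' ∈ quaternionFinset, chi (g * g') = chi g * chi g' := by
  decide

lemma chi_inv : ∀ g : G3, chi g⁻¹ = chi g := by decide

lemma chi_mul_self : ∀ g : G3, chi g * chi g = 1 := by decide

lemma relInv_iff (f : S3) :
    (∀ h ∈ H3, actS h f = chi h • f) ↔ actS im f = f ∧ actS jm f = -f := by
  have him : im ∈ H3 := Subgroup.subset_closure (by simp)
  have hjm : jm ∈ H3 := Subgroup.subset_closure (by simp)
  have chi_im : chi im = 1 := by decide
  have chi_jm : chi jm = -1 := by decide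
  refine ⟨fun hf => ⟨?_, ?_⟩, fun ⟨hi, hj⟩ h hh => ?_⟩
  · rw [hf im him, chi_im, one_smul]
  · rw [hf jm hjm, chi_jm, neg_one_smul]
  induction hh using Subgroup.closure_induction with
  | mem x hx =>
    rcases hx with rfl | rfl
    · rw [hi, chi_im, one_smul]
    · rw [hj, chi_jm, neg_one_smul]
  | one => rw [actS_one, AlgHom.id_apply, (by decide : chi 1 = 1), one_smul]
  | mul x y hx hy ihx ihy =>
    rw [← actS_actS, ihy, map_smul, ihx, smul_smul, mul_comm,
      chi_mul_of_mem_quaternionFinset x (H3_le_quaternionSubgroup hx) y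
        (H3_le_quaternionSubgroup hy)]
  | inv x _ ihx =>
    have h := congrArg (actS x⁻¹) ihx
    rw [actS_actS, inv_mul_cancel, actS_one, AlgHom.id_apply, map_smul] at h
    rw [chi_inv, ← one_smul F3 (actS x⁻¹ f), ← chi_mul_self x, mul_smul, ← h]

lemma actS_tm_injective : Function.Injective (actS tm) :=
  Function.LeftInverse.injective (g := fun f => actS tm (actS tm f)) actS_tm_tm_tm

lemma actS_im_actS_tm (f : S3) : actS im (actS tm f) = actS tm (actS jm f) := by
  rw [actS_actS, im_mul_tm, actS_actS]

lemma actS_im_actS_tm_tm (f : S3) :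
    actS im (actS tm (actS tm f)) = actS tm (actS tm (actS im (actS jm f))) := by
  have h : im * (tm * tm) = tm * (tm * (im * jm)) := Subtype.ext (by decide)
  rw [actS_actS tm, actS_actS im, h]
  simp only [← actS_actS]

lemma actR_tm_Theta1 (f : S3) : actR tm (Theta1 f) = Theta1 f := by
  rw [Theta1, actR_tm_oneForm, actS_tm_tm_tm]

lemma actR_im_Theta1 {f : S3} (hi : actS im f = f) (hj : actS jm f = -f) :
    actR im (Theta1 f) = Theta1 f := by
  rw [Theta1, actR_im_oneForm, actS_im_actS_tm, actS_im_actS_tm_tm, hj]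
  simp only [map_neg, hi, neg_neg]

lemma Theta1_mem_oneForms (f : S3) : Theta1 f ∈ oneForms := ⟨_, _, _, rfl⟩

lemma actR_Theta1 {f : S3} (hi : actS im f = f) (hj : actS jm f = -f) (g : G3) :
    actR g (Theta1 f) = Theta1 f :=
  actR_eq_of_tm_im (actR_tm_Theta1 f) (actR_im_Theta1 hi hj) g

lemma exists_Theta1_eq {z : Rf} (hz : z ∈ oneForms) (hG : ∀ g, actR g z = z) :
    ∃ f, (actS im f = f ∧ actS jm f = -f) ∧ Theta1 f = z := by
  obtain ⟨f₀, f₁, f₂, rfl⟩ := hz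
  have ht := hG tm
  have hi := hG im
  rw [actR_tm_oneForm] at ht
  rw [actR_im_oneForm] at hi
  obtain ⟨-, ht₁, ht₂⟩ := tmul_yy_injective ht
  obtain ⟨hi₀, hi₁, -⟩ := tmul_yy_injective hi
  have hj : actS jm f₀ = -f₀ := by
    apply actS_tm_injective
    rw [← actS_im_actS_tm, ht₁, map_neg, ht₁]
    linear_combination -hi₁
  exact ⟨f₀, ⟨hi₀, hj⟩, by rw [Theta1, ht₁, ht₂]⟩

/-- `Θ₁(f) = f·y₁ + (t·f)·y₂ + (t²·f)·y₃` is well defined from `S^H_χ` into the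
`G`-invariant 1-forms, and is an isomorphism of `S^G`-modules from `S^H_χ` onto
`{f₁y₁ + f₂y₂ + f₃y₃ : fₛ ∈ S} ∩ R^G`. -/
theorem stmt9 :
    -- well defined into the `G`-invariant `1`-forms
    (∀ f : S3, (∀ h ∈ H3, actS h f = chi h • f) →
      Theta1 f ∈ oneForms ∧ ∀ g : G3, actR g (Theta1 f) = Theta1 f) ∧
    -- additive
    (∀ f₁ f₂ : S3, Theta1 (f₁ + f₂) = Theta1 f₁ + Theta1 f₂) ∧
    -- `S^G`-linear, the `S^G`-action on `R` being multiplication in the first factor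
    (∀ s f : S3, (∀ g : G3, actS g s = s) → (∀ h ∈ H3, actS h f = chi h • f) →
      Theta1 (s * f) = (s ⊗ₜ[F3] (1 : Lam)) * Theta1 f) ∧
    -- bijective from `S^H_χ` onto the `G`-invariant `1`-forms
    Set.BijOn Theta1 {f : S3 | ∀ h ∈ H3, actS h f = chi h • f}
      (oneForms ∩ {z : Rf | ∀ g : G3, actR g z = z}) := by
  have mapsTo : ∀ f : S3, (∀ h ∈ H3, actS h f = chi h • f) →
      Theta1 f ∈ oneForms ∧ ∀ g : G3, actR g (Theta1 f) = Theta1 f := fun f hf =>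
    ⟨Theta1_mem_oneForms f, actR_Theta1 ((relInv_iff f).1 hf).1 ((relInv_iff f).1 hf).2⟩
  refine ⟨mapsTo, fun f₁ f₂ => ?_, fun s f hs _ => ?_, mapsTo, fun f _ f' _ h => ?_, ?_⟩
  · simp only [Theta1, map_add, TensorProduct.add_tmul]
    abel
  · simp only [Theta1, map_mul, hs tm, mul_add, Algebra.TensorProduct.tmul_mul_tmul, one_mul]
  · exact (tmul_yy_injective h).1
  · rintro z ⟨hz, hG⟩
    obtain ⟨f, hf, rfl⟩ := exists_Theta1_eq hz hG
    exact ⟨f, (relInv_iff f).2 hf, rfl⟩
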